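/- Fix a positive integer k. For every x ≥ 2, the eventual cycle of the orbit of x under φ_k contains at least one prime p with p ≤ k²/2 or p ∈ {2,3}. Consequently, the number of distinct cycles of φ_k, as x ranges over all integers ≥ 2, is finite and bounded above by the number of primes ≤ k²/2 (plus a bounded constant for small primes). -/

import Mathlib

/-- The largest prime factor of `n` (0 if `n` has no prime factor). -/
def maxPrimeFac (n : ℕ) : ℕ := n.primeFactors.sup id

/-- The map φ_k : x ↦ x + k if x is prime, else the largest prime factor of x. -/
def phi (k x : ℕ) : ℕ := if x.Prime then x + k else maxPrimeFac x

/-- A natural number is composite if it is at least 2 and not prime. -/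
def Composite (n : ℕ) : Prop := 2 ≤ n ∧ ¬ n.Prime

/-- A cycle of φ_k: a finite nonempty set of integers ≥ 2, invariant under φ_k,
on which φ_k acts transitively (hence as a cyclic permutation). -/
def IsCycle (k : ℕ) (C : Finset ℕ) : Prop :=
  C.Nonempty ∧ (∀ x ∈ C, 2 ≤ x) ∧ (∀ x ∈ C, phi k x ∈ C) ∧
    ∀ x ∈ C, ∀ y ∈ C, ∃ n, (phi k)^[n] x = y

/-!
Let `r` be the least prime not dividing `k`; it is at most `k + 1`, since the least prime
factor of `k + 1` does not divide `k`. Take a prime `p > k + 1`. As `r ∤ k` and `r ∤ p`,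
some `p + i k` with `0 < i < r` is a multiple of `r` exceeding `r`, so the chain
`p, p + k, p + 2k, …` of iterates reaches a composite `c = p + j k` with `0 < j < r`.
A prime factor of `c` dividing `k` would divide `p`, so every prime factor of `c` is at
least `r`, and the next iterate, the largest prime factor `q` of `c`, satisfies
`q r ≤ c < p r`. Every prime with `2p > k²` other than `2, 3` exceeds `k + 1`, so each orbit
descends to a prime with `2p ≤ k²` or `p ∈ {2, 3}`. These finitely many primes are then
visited infinitely often, each cycle contains one of them, and two cycles with a common
point coincide.
-/

open Finset

lemma maxPrimeFac_mem_primeFactors {n : ℕ} (hn : 2 ≤ n) : maxPrimeFac n ∈ n.primeFactors := by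
  obtain ⟨q, hq, hq_eq⟩ :=
    exists_mem_eq_sup n.primeFactors (Nat.nonempty_primeFactors.mpr hn) id
  simpa [maxPrimeFac, hq_eq] using hq

lemma maxPrimeFac_prime {n : ℕ} (hn : 2 ≤ n) : (maxPrimeFac n).Prime :=
  Nat.prime_of_mem_primeFactors (maxPrimeFac_mem_primeFactors hn)

lemma maxPrimeFac_dvd {n : ℕ} (hn : 2 ≤ n) : maxPrimeFac n ∣ n :=
  Nat.dvd_of_mem_primeFactors (maxPrimeFac_mem_primeFactors hn)

lemma maxPrimeFac_mul_le {n r : ℕ} (hn : 2 ≤ n) (hn_prime : ¬ n.Prime)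
    (hr : ∀ t, t.Prime → t ∣ n → r ≤ t) : maxPrimeFac n * r ≤ n := by
  obtain ⟨m, hm⟩ := maxPrimeFac_dvd hn
  have hm_ne_one : m ≠ 1 := by
    rintro rfl
    rw [mul_one] at hm
    exact hn_prime (hm ▸ maxPrimeFac_prime hn)
  have hm_pos : 0 < m := Nat.pos_of_ne_zero (by rintro rfl; omega)
  have hr_le : r ≤ m :=
    (hr _ (Nat.minFac_prime hm_ne_one) (hm ▸ dvd_mul_of_dvd_right m.minFac_dvd _)).trans
      (Nat.minFac_le hm_pos)
  calc maxPrimeFac n * r ≤ maxPrimeFac n * m := Nat.mul_le_mul_left _ hr_le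
    _ = n := hm.symm

lemma phi_of_prime {k p : ℕ} (hp : p.Prime) : phi k p = p + k := if_pos hp

lemma phi_of_not_prime {k x : ℕ} (hx : ¬ x.Prime) : phi k x = maxPrimeFac x := if_neg hx

lemma two_le_phi {k x : ℕ} (hx : 2 ≤ x) : 2 ≤ phi k x := by
  by_cases hx_prime : x.Prime
  · rw [phi_of_prime hx_prime]; omega
  · rw [phi_of_not_prime hx_prime]; exact (maxPrimeFac_prime hx).two_le

lemma two_le_iterate_phi {k x : ℕ} (hx : 2 ≤ x) (n : ℕ) : 2 ≤ (phi k)^[n] x := by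
  induction n with
  | zero => exact hx
  | succ n ih => rw [Function.iterate_succ_apply']; exact two_le_phi ih

lemma iterate_phi_eq_add_mul {k p j : ℕ} (h : ∀ l < j, (p + l * k).Prime) :
    (phi k)^[j] p = p + j * k := by
  induction j with
  | zero => simp
  | succ j ih =>
    rw [Function.iterate_succ_apply', ih fun l hl => h l (by omega), phi_of_prime (h j (by omega))]
    ring

lemma exists_prime_not_dvd_le_succ {k : ℕ} (hk : 1 ≤ k) :
    ∃ r, r.Prime ∧ ¬ r ∣ k ∧ r ≤ k + 1 ∧ ∀ t, t.Prime → ¬ t ∣ k → r ≤ t := by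
  have hk_succ : k + 1 ≠ 1 := by omega
  have hq := Nat.minFac_prime hk_succ
  have hq_ndvd : ¬ (k + 1).minFac ∣ k := fun hdvd =>
    hq.one_lt.ne' (Nat.dvd_one.mp ((Nat.dvd_add_right hdvd).mp (k + 1).minFac_dvd))
  have hex : ∃ r, r.Prime ∧ ¬ r ∣ k := ⟨_, hq, hq_ndvd⟩
  classical
  exact ⟨Nat.find hex, (Nat.find_spec hex).1, (Nat.find_spec hex).2,
    (Nat.find_min' hex ⟨hq, hq_ndvd⟩).trans (Nat.minFac_le (by omega)),
    fun t ht htk => Nat.find_min' hex ⟨ht, htk⟩⟩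

lemma exists_pos_lt_dvd_add_mul {r p k : ℕ} (hr : r.Prime) (hrk : ¬ r ∣ k) (hrp : ¬ r ∣ p) :
    ∃ i, 0 < i ∧ i < r ∧ r ∣ p + i * k := by
  have : Fact r.Prime := ⟨hr⟩
  have hk : (k : ZMod r) ≠ 0 := by rwa [Ne, ZMod.natCast_eq_zero_iff]
  set i := (-(p : ZMod r) * (k : ZMod r)⁻¹).val
  have hdvd : r ∣ p + i * k := by
    rw [← ZMod.natCast_eq_zero_iff]
    push_cast
    rw [ZMod.natCast_zmod_val, mul_assoc, inv_mul_cancel₀ hk]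
    ring
  refine ⟨i, Nat.pos_of_ne_zero fun hi => hrp ?_, ZMod.val_lt _, hdvd⟩
  simpa [hi] using hdvd

lemma exists_iterate_phi_prime_lt {k p : ℕ} (hk : 1 ≤ k) (hp : p.Prime) (hkp : k + 1 < p) :
    ∃ m, ((phi k)^[m] p).Prime ∧ (phi k)^[m] p < p := by
  obtain ⟨r, hr, hrk, hr_le, hr_min⟩ := exists_prime_not_dvd_le_succ hk
  have hrp : ¬ r ∣ p := fun h => by
    have := (Nat.prime_dvd_prime_iff_eq hr hp).mp h
    omega
  obtain ⟨i, hi_pos, hir, hri⟩ := exists_pos_lt_dvd_add_mul hr hrk hrp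
  have hi_comp : ¬ (p + i * k).Prime := fun h => by
    have := (Nat.prime_dvd_prime_iff_eq hr h).mp hri
    nlinarith
  classical
  have hex : ∃ j, ¬ (p + j * k).Prime := ⟨i, hi_comp⟩
  set j := Nat.find hex
  have hj_le : j ≤ i := Nat.find_min' hex hi_comp
  have hc_comp : ¬ (p + j * k).Prime := Nat.find_spec hex
  have hc_two : 2 ≤ p + j * k := by have := hp.two_le; omega
  have hiterate : (phi k)^[j + 1] p = maxPrimeFac (p + j * k) := by
    rw [Function.iterate_succ_apply',
      iterate_phi_eq_add_mul fun l hl => not_not.mp (Nat.find_min hex hl), phi_of_not_prime hc_comp]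
  have hfactors : ∀ t, t.Prime → t ∣ p + j * k → r ≤ t := by
    refine fun t ht htc => hr_min t ht fun htk => ?_
    have htp : t ∣ p := (Nat.dvd_add_left (dvd_mul_of_dvd_right htk j)).mp htc
    have hpk : p ∣ k := (Nat.prime_dvd_prime_iff_eq ht hp).mp htp ▸ htk
    have := Nat.le_of_dvd hk hpk
    omega
  have hbound : maxPrimeFac (p + j * k) * r < p * r :=
    calc maxPrimeFac (p + j * k) * r ≤ p + j * k := maxPrimeFac_mul_le hc_two hc_comp hfactors
      _ < p * r := by nlinarith [hr.two_le]
  exact ⟨j + 1, hiterate ▸ maxPrimeFac_prime hc_two, hiterate ▸ Nat.lt_of_mul_lt_mul_right hbound⟩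

def smallPrimes (k : ℕ) : Finset ℕ := (range (k ^ 2 / 2 + 1)).filter Nat.Prime ∪ {2, 3}

lemma mem_smallPrimes {k p : ℕ} :
    p ∈ smallPrimes k ↔ p.Prime ∧ (2 * p ≤ k ^ 2 ∨ p = 2 ∨ p = 3) := by
  simp only [smallPrimes, mem_union, mem_filter, mem_range, mem_insert, mem_singleton]
  constructor
  · rintro (⟨hp_le, hp⟩ | rfl | rfl)
    · exact ⟨hp, Or.inl (by omega)⟩
    · exact ⟨Nat.prime_two, by omega⟩
    · exact ⟨Nat.prime_three, by omega⟩
  · rintro ⟨hp, hp_le | rfl | rfl⟩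
    · exact Or.inl ⟨by omega, hp⟩
    · exact Or.inr (Or.inl rfl)
    · exact Or.inr (Or.inr rfl)

lemma card_smallPrimes_le (k : ℕ) :
    (smallPrimes k).card ≤ ((range (k ^ 2 / 2 + 1)).filter Nat.Prime).card + 2 :=
  (card_union_le _ _).trans (Nat.add_le_add_left card_le_two _)

lemma succ_lt_of_notMem_smallPrimes {k p : ℕ} (hp : p.Prime) (hp_small : p ∉ smallPrimes k) :
    k + 1 < p := by
  simp only [mem_smallPrimes, hp, true_and, not_or] at hp_small
  obtain ⟨hp_large, hp_ne_two, hp_ne_three⟩ := hp_small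
  have hp_five : 5 ≤ p := by
    have := hp.two_le
    have : p ≠ 4 := by rintro rfl; exact absurd hp (by decide)
    omega
  rcases Nat.lt_or_ge k 4 with hk | hk
  · omega
  · nlinarith

lemma exists_iterate_phi_prime_mem_smallPrimes {k p : ℕ} (hk : 1 ≤ k) (hp : p.Prime) :
    ∃ m, (phi k)^[m] p ∈ smallPrimes k := by
  induction p using Nat.strong_induction_on with
  | _ p ih =>
  by_cases hp_small : p ∈ smallPrimes k
  · exact ⟨0, hp_small⟩
  obtain ⟨m, hq, hq_lt⟩ :=
    exists_iterate_phi_prime_lt hk hp (succ_lt_of_notMem_smallPrimes hp hp_small)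
  obtain ⟨n, hn⟩ := ih _ hq_lt hq
  exact ⟨n + m, by rwa [Function.iterate_add_apply]⟩

lemma exists_iterate_phi_mem_smallPrimes {k x : ℕ} (hk : 1 ≤ k) (hx : 2 ≤ x) :
    ∃ m, (phi k)^[m] x ∈ smallPrimes k := by
  by_cases hx_prime : x.Prime
  · exact exists_iterate_phi_prime_mem_smallPrimes hk hx_prime
  obtain ⟨m, hm⟩ := exists_iterate_phi_prime_mem_smallPrimes hk (maxPrimeFac_prime hx)
  refine ⟨m + 1, ?_⟩
  rwa [Function.iterate_add_apply, Function.iterate_one, phi_of_not_prime hx_prime]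

lemma exists_mem_smallPrimes_frequently_iterate_phi_eq {k x : ℕ} (hk : 1 ≤ k) (hx : 2 ≤ x) :
    ∃ p ∈ smallPrimes k, ∃ᶠ n in Filter.atTop, (phi k)^[n] x = p := by
  refine (smallPrimes k).frequently_exists.mp (Filter.frequently_atTop.mpr fun n => ?_)
  obtain ⟨m, hm⟩ := exists_iterate_phi_mem_smallPrimes hk (two_le_iterate_phi (k := k) hx n)
  exact ⟨m + n, by omega, _, hm, by rw [Function.iterate_add_apply]⟩

namespace IsCycle

variable {k : ℕ} {C D : Finset ℕ}

lemma iterate_mem (hC : IsCycle k C) {x : ℕ} (hx : x ∈ C) (n : ℕ) : (phi k)^[n] x ∈ C :=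
  Set.MapsTo.iterate (f := phi k) (s := C) hC.2.2.1 n hx

lemma subset_of_mem (hC : IsCycle k C) (hD : IsCycle k D) {x : ℕ} (hxC : x ∈ C) (hxD : x ∈ D) :
    C ⊆ D := fun y hy => by
  obtain ⟨n, rfl⟩ := hC.2.2.2 x hxC y hy
  exact hD.iterate_mem hxD n

lemma eq_of_mem (hC : IsCycle k C) (hD : IsCycle k D) {x : ℕ} (hxC : x ∈ C) (hxD : x ∈ D) :
    C = D :=
  (hC.subset_of_mem hD hxC hxD).antisymm (hD.subset_of_mem hC hxD hxC)

lemma exists_mem_smallPrimes (hk : 1 ≤ k) (hC : IsCycle k C) : ∃ p ∈ C, p ∈ smallPrimes k := by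
  obtain ⟨x, hx⟩ := hC.1
  obtain ⟨m, hm⟩ := exists_iterate_phi_mem_smallPrimes hk (hC.2.1 x hx)
  exact ⟨_, hC.iterate_mem hx m, hm⟩

end IsCycle

theorem cycles_finite (k : ℕ) (hk : 1 ≤ k) :
    (∀ x ≥ 2, ∃ p : ℕ, p.Prime ∧ (2 * p ≤ k ^ 2 ∨ p = 2 ∨ p = 3) ∧
      ∀ n : ℕ, ∃ i ≥ n, (phi k)^[i] x = p) ∧
    {C : Finset ℕ | IsCycle k C}.Finite ∧
    {C : Finset ℕ | IsCycle k C}.ncard ≤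
      ((Finset.range (k ^ 2 / 2 + 1)).filter Nat.Prime).card + 2 := by
  have hchoice : ∀ C, ∃ p, IsCycle k C → p ∈ C ∧ p ∈ smallPrimes k := fun C => by
    by_cases hC : IsCycle k C
    · obtain ⟨p, hpC, hp⟩ := hC.exists_mem_smallPrimes hk
      exact ⟨p, fun _ => ⟨hpC, hp⟩⟩
    · exact ⟨0, fun h => absurd h hC⟩
  choose f hf using hchoice
  have hmaps : Set.MapsTo f {C | IsCycle k C} (smallPrimes k) := fun C hC => (hf C hC).2
  have hinj : Set.InjOn f {C | IsCycle k C} := fun C hC D hD hCD =>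
    IsCycle.eq_of_mem hC hD (hf C hC).1 (hCD ▸ (hf D hD).1)
  refine ⟨fun x hx => ?_, Set.Finite.of_injOn hmaps hinj (smallPrimes k).finite_toSet, ?_⟩
  · obtain ⟨p, hp, hfreq⟩ := exists_mem_smallPrimes_frequently_iterate_phi_eq hk hx
    obtain ⟨hp_prime, hp_small⟩ := mem_smallPrimes.mp hp
    exact ⟨p, hp_prime, hp_small, Filter.frequently_atTop.mp hfreq⟩
  · calc {C | IsCycle k C}.ncard
        ≤ (smallPrimes k : Set ℕ).ncard :=
          Set.ncard_le_ncard_of_injOn f hmaps hinj (smallPrimes k).finite_toSet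
      _ = (smallPrimes k).card := Set.ncard_coe_finset _
      _ ≤ _ := card_smallPrimes_le k
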